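/- Let n be a prime number and let Ω ⊆ U_n := {0,...,n-1} be a nonempty index set that is closed under the symmetry k ∈ Ω ⟹ n−k ∈ Ω for k = 1,...,n−1. Then the set of ℓ₁-unit-norm vectors of minimal support in the real nullspace of F_Ω satisfies: MinSupp(null(F_Ω) ∩ ℝⁿ) ∩ S₁^{n-1} equals the union over all Γ ⊆ U_n with |Γ| = |Ω| + 1 of null(F_Ω) ∩ null(proj_{Γ^c}) ∩ S₁^{n-1}. -/

import Mathlib

/-- The ℓ₁ norm of a vector in ℝⁿ. -/
noncomputable def l1 {n : ℕ} (x : Fin n → ℝ) : ℝ := ∑ i, |x i|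

/-- `ξ = e^{-2πi/n}`, the primitive `n`-th root of unity used in the DFT. -/
noncomputable def dftXi (n : ℕ) : ℂ :=
  Complex.exp (-2 * (Real.pi : ℂ) * Complex.I / (n : ℂ))

/-- The `n × n` DFT matrix, `[F_n]_{k,l} = (1/√n) ξ^{kl}`. -/
noncomputable def Fdft (n : ℕ) : Matrix (Fin n) (Fin n) ℂ :=
  Matrix.of fun k l => ((Real.sqrt n : ℝ) : ℂ)⁻¹ * dftXi n ^ ((k : ℕ) * (l : ℕ))

/-- The partial DFT matrix `F_Ω`: the rows of `F_n` indexed by `Ω` (in increasing order). -/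
noncomputable def FdftRows (n : ℕ) (Ω : Finset (Fin n)) :
    Matrix (Fin Ω.card) (Fin n) ℂ :=
  Matrix.of fun a l => Fdft n (Ω.orderEmbOfFin rfl a) l

/-- `x` is a real vector in the nullspace of the partial DFT matrix `F_Ω`. -/
def InRealNull (n : ℕ) (Ω : Finset (Fin n)) (x : Fin n → ℝ) : Prop :=
  (FdftRows n Ω).mulVec (fun i => (x i : ℂ)) = 0

/-!
By Chebotarev's theorem every square minor of the DFT matrix of prime order is nonzero, so a
nonzero vector of `null(F_Ω)` has more than `|Ω|` nonzero entries. Conversely, a set `Γ` with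
`|Γ| > |Ω|` carries a nonzero complex null vector (more unknowns than equations); as `Ω = -Ω`, the
null space is closed under conjugation, so the real or the imaginary part of that vector is a
nonzero real null vector supported in `Γ`. Hence minimal supports have exactly `|Ω| + 1` elements,
and every null vector supported on `|Ω| + 1` coordinates has minimal support.

Chebotarev's theorem is proved following Frenkel: `det (X_j ^ a_i) = V(X) * S(X)` with `V` the
Vandermonde product. Specialising `X_t ↦ x ^ t` gives `S(1, …, 1) * ∏ (j - i) = ∏ (a_j - a_i)`, so
`p ∤ S(1, …, 1)`; specialising `X_t ↦ x ^ b_t` gives `det (x ^ (a_i b_j)) = (x - 1) ^ N * Q(x)` with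
`p ∤ Q(1)`. If `ζ` were a root, the cyclotomic polynomial `Φ_p` would divide `Q`, and then
`p = Φ_p(1)` would divide `Q(1)`.
-/

open Finset Matrix

section MinimalSupport

variable {ι R : Type*} [Fintype ι] [Zero R] {P : (ι → R) → Prop} {m : ℕ}

theorem minimal_support_iff_exists_card_eq
    (h_spark : ∀ v (T : Finset ι), P v → (∀ i ∉ T, v i = 0) → #T ≤ m → v = 0)
    (h_fill : ∀ Γ : Finset ι, m < #Γ → ∃ v, P v ∧ v ≠ 0 ∧ ∀ i ∉ Γ, v i = 0) (x : ι → R) :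
    (P x ∧ x ≠ 0 ∧ ¬∃ y, P y ∧ y ≠ 0 ∧ Function.support y ⊂ Function.support x) ↔
      (P x ∧ x ≠ 0 ∧ ∃ Γ : Finset ι, #Γ = m + 1 ∧ ∀ i ∉ Γ, x i = 0) := by
  classical
  refine and_congr_right fun hx => and_congr_right fun hx0 => ?_
  have mem_of_support {v : ι → R} {Γ : Finset ι} (hv : ∀ i ∉ Γ, v i = 0) {i : ι}
      (hi : i ∈ Function.support v) : i ∈ Γ := by_contra fun h => hi (hv i h)
  constructor
  · intro hmin
    set T := univ.filter (x · ≠ 0)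
    have hT : ∀ i ∉ T, x i = 0 := by simp [T]
    have hmT : m < #T := lt_of_not_ge fun h => hx0 (h_spark x T hx hT h)
    refine ⟨T, le_antisymm (not_lt.mp fun hlt => hmin ?_) hmT, hT⟩
    obtain ⟨t, ht⟩ := card_pos.mp (m.zero_le.trans_lt hmT)
    obtain ⟨y, hy, hy0, hyΓ⟩ := h_fill (T.erase t) (by rw [card_erase_of_mem ht]; omega)
    have hyx : Function.support y ⊆ Function.support x := fun i hi =>
      (mem_filter.mp (mem_of_mem_erase (mem_of_support hyΓ hi))).2
    refine ⟨y, hy, hy0, (Set.ssubset_iff_of_subset hyx).mpr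
      ⟨t, (mem_filter.mp ht).2, fun hyt => ?_⟩⟩
    exact notMem_erase t T (mem_of_support hyΓ hyt)
  · rintro ⟨Γ, hΓ, hxΓ⟩ ⟨y, hy, hy0, hyx⟩
    obtain ⟨t, htx, hty⟩ := Set.exists_of_ssubset hyx
    refine hy0 (h_spark y (Γ.erase t) hy (fun i hi => ?_) ?_)
    · by_contra hyi
      refine hi (mem_erase.mpr ⟨?_, mem_of_support hxΓ (hyx.subset hyi)⟩)
      rintro rfl
      exact hty hyi
    · rw [card_erase_of_mem (mem_of_support hxΓ htx), hΓ, Nat.add_sub_cancel]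

end MinimalSupport

theorem Finset.prod_dvd_of_forall_prime_dvd {ι M : Type*} [CommMonoidWithZero M] {s : Finset ι}
    {g : ι → M} {f : M} (hp : ∀ i ∈ s, Prime (g i))
    (hnd : ∀ i ∈ s, ∀ j ∈ s, i ≠ j → ¬g i ∣ g j) (hd : ∀ i ∈ s, g i ∣ f) :
    ∏ i ∈ s, g i ∣ f := by
  classical
  induction s using Finset.induction_on generalizing f with
  | empty => simp
  | insert a s ha ih =>
    obtain ⟨h, rfl⟩ := hd a (mem_insert_self a s)
    rw [prod_insert ha]
    refine mul_dvd_mul_left _ (ih (fun i hi => hp i (mem_insert_of_mem hi))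
      (fun i hi j hj => hnd i (mem_insert_of_mem hi) j (mem_insert_of_mem hj)) fun i hi => ?_)
    have hia : i ≠ a := ne_of_mem_of_not_mem hi ha
    exact ((hp i (mem_insert_of_mem hi)).dvd_or_dvd (hd i (mem_insert_of_mem hi))).resolve_left
      (hnd i (mem_insert_of_mem hi) a (mem_insert_self a s) hia)

namespace MvPolynomial

variable {σ R : Type*} [CommRing R]

theorem X_sub_X_dvd_sub_rename_update [DecidableEq σ] (i j : σ) (f : MvPolynomial σ R) :
    X i - X j ∣ f - rename (Function.update id i j) f := by
  rw [← Ideal.mem_span_singleton, ← Ideal.Quotient.eq]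
  let π := Ideal.Quotient.mkₐ R (Ideal.span {(X i - X j : MvPolynomial σ R)})
  have : π.comp (rename (Function.update id i j)) = π := by
    refine algHom_ext fun t => ?_
    rw [AlgHom.comp_apply, rename_X, Ideal.Quotient.mkₐ_eq_mk, Ideal.Quotient.eq,
      Ideal.mem_span_singleton]
    rcases eq_or_ne t i with rfl | ht
    · rw [Function.update_self]; exact dvd_sub_comm.mp dvd_rfl
    · simp [ht]
  exact (congrArg (· f) this).symm

theorem X_sub_X_dvd_iff [DecidableEq σ] {i j : σ} (f : MvPolynomial σ R) :
    X i - X j ∣ f ↔ rename (Function.update id i j) f = 0 := by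
  refine ⟨?_, fun h => by simpa [h] using X_sub_X_dvd_sub_rename_update i j f⟩
  rintro ⟨g, rfl⟩
  simp [Function.update_apply]

theorem prime_X_sub_X [IsDomain R] {i j : σ} (h : i ≠ j) :
    Prime (X i - X j : MvPolynomial σ R) := by
  classical
  have hφ : rename (Function.update id i j) (X i - X j : MvPolynomial σ R) = 0 := by
    simp [Function.update_apply]
  refine ⟨sub_ne_zero.mpr ((X_injective (R := R)).ne h), fun hu => ?_, fun a b hab => ?_⟩
  · exact not_isUnit_zero (hφ ▸ hu.map (rename (Function.update id i j)))
  · simpa only [X_sub_X_dvd_iff, map_mul, mul_eq_zero] using hab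

theorem prod_X_sub_X_dvd_det_X_pow [IsDomain R] {k : ℕ} (a : Fin k → ℕ) :
    ∏ i : Fin k, ∏ j ∈ Ioi i, (X j - X i : MvPolynomial (Fin k) R) ∣
      (of fun i j => X j ^ a i : Matrix (Fin k) (Fin k) (MvPolynomial (Fin k) R)).det := by
  rw [← prod_sigma univ Ioi fun p => (X p.2 - X p.1 : MvPolynomial (Fin k) R)]
  refine prod_dvd_of_forall_prime_dvd (fun p hp => prime_X_sub_X ?_) (fun p hp q hq hpq => ?_)
    fun p hp => ?_
  · exact (mem_Ioi.mp (mem_sigma.mp hp).2).ne'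
  · have hp' := mem_Ioi.mp (mem_sigma.mp hp).2
    have hq' := mem_Ioi.mp (mem_sigma.mp hq).2
    rw [X_sub_X_dvd_iff, map_sub, rename_X, rename_X, sub_eq_zero, X_injective.eq_iff]
    grind
  · have hp' := mem_Ioi.mp (mem_sigma.mp hp).2
    rw [X_sub_X_dvd_iff, AlgHom.map_det]
    refine det_zero_of_column_eq hp'.ne' fun r => ?_
    simp [Function.update_apply]

end MvPolynomial

open Polynomial

theorem IsPrimitiveRoot.prime_dvd_eval_one_of_aeval_eq_zero {K : Type*} [Field K] [CharZero K]
    {p : ℕ} (hp : p.Prime) {ζ : K} (hζ : IsPrimitiveRoot ζ p) {Q : ℤ[X]} (hQ : aeval ζ Q = 0) :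
    (p : ℤ) ∣ Q.eval 1 := by
  have : Fact p.Prime := ⟨hp⟩
  have hdvd := minpoly.isIntegrallyClosed_dvd (hζ.isIntegral hp.pos) hQ
  rw [← cyclotomic_eq_minpoly hζ hp.pos] at hdvd
  simpa [eval_one_cyclotomic_prime] using eval_dvd (x := 1) hdvd

namespace Polynomial

variable {R : Type*} [CommRing R]

theorem X_pow_sub_X_pow_eq {l m : ℕ} (h : l ≤ m) :
    (X : R[X]) ^ m - X ^ l = (X - 1) * (X ^ l * ∑ t ∈ range (m - l), X ^ t) := by
  rw [mul_left_comm, mul_comm (X - 1), geom_sum_mul, mul_sub, ← pow_add, Nat.add_sub_cancel' h,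
    mul_one]

theorem exists_prod_X_pow_sub_X_pow_eq {k : ℕ} {c : Fin k → ℕ} (hc : StrictMono c) :
    ∃ G : R[X], ∏ i : Fin k, ∏ j ∈ Ioi i, ((X : R[X]) ^ c j - X ^ c i) =
      (X - 1) ^ (∑ i : Fin k, #(Ioi i)) * G ∧
      G.eval 1 = ∏ i : Fin k, ∏ j ∈ Ioi i, ((c j : R) - c i) := by
  refine ⟨∏ i : Fin k, ∏ j ∈ Ioi i, (X ^ c i * ∑ t ∈ range (c j - c i), X ^ t), ?_, ?_⟩
  · simp_rw [← prod_pow_eq_pow_sum, ← prod_const, ← prod_mul_distrib]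
    exact prod_congr rfl fun i _ => prod_congr rfl fun j hj =>
      X_pow_sub_X_pow_eq (hc (mem_Ioi.mp hj)).le
  · simp only [eval_prod, eval_mul, eval_pow, eval_X, one_pow, eval_finsetSum, one_mul,
      sum_const, card_range, nsmul_one]
    exact prod_congr rfl fun i _ => prod_congr rfl fun j hj =>
      Nat.cast_sub (hc (mem_Ioi.mp hj)).le

end Polynomial

section Chebotarev

variable {k : ℕ} {R : Type*} [CommRing R]

theorem eval_one_aeval_X_pow (c : Fin k → ℕ) (f : MvPolynomial (Fin k) R) :
    (MvPolynomial.aeval (fun t => (X : R[X]) ^ c t) f).eval 1 = MvPolynomial.eval 1 f := by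
  induction f using MvPolynomial.induction_on <;> simp_all

theorem exists_det_X_pow_mul_eq {a : Fin k → ℕ} {S : MvPolynomial (Fin k) R}
    (hS : (of fun i j => MvPolynomial.X j ^ a i : Matrix (Fin k) (Fin k) _).det =
      (∏ i : Fin k, ∏ j ∈ Ioi i, (MvPolynomial.X j - MvPolynomial.X i)) * S)
    {c : Fin k → ℕ} (hc : StrictMono c) :
    ∃ G : R[X], (of fun i j => (X : R[X]) ^ (a i * c j)).det =
      (X - 1) ^ (∑ i : Fin k, #(Ioi i)) * (G * MvPolynomial.aeval (fun t => X ^ c t) S) ∧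
      G.eval 1 = ∏ i : Fin k, ∏ j ∈ Ioi i, ((c j : R) - c i) := by
  obtain ⟨G, hG, hG1⟩ := exists_prod_X_pow_sub_X_pow_eq (R := R) hc
  refine ⟨G, ?_, hG1⟩
  have := congrArg (MvPolynomial.aeval fun t => (X : R[X]) ^ c t) hS
  simp only [AlgHom.map_det, map_mul, map_prod, map_sub, MvPolynomial.aeval_X, hG] at this
  rw [← mul_assoc, ← this]
  congr 1
  ext i j
  simp [← pow_mul, mul_comm]

theorem not_dvd_prod_sub_of_lt {p : ℕ} (hp : p.Prime) {c : Fin k → ℕ} (hc : StrictMono c)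
    (hcp : ∀ i, c i < p) : ¬(p : ℤ) ∣ ∏ i : Fin k, ∏ j ∈ Ioi i, ((c j : ℤ) - c i) := by
  simp only [(Nat.prime_iff_prime_int.mp hp).dvd_finsetProd_iff, mem_Ioi, not_exists, not_and]
  intro i _ j hij hdvd
  have := hc hij
  have := hcp j
  have := Int.le_of_dvd (by omega) hdvd
  omega

theorem not_dvd_eval_one_of_det_X_pow_eq {p : ℕ} (hp : p.Prime) {a : Fin k → ℕ}
    (ha : StrictMono a) (hap : ∀ i, a i < p) {S : MvPolynomial (Fin k) ℤ}
    (hS : (of fun i j => MvPolynomial.X j ^ a i : Matrix (Fin k) (Fin k) _).det =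
      (∏ i : Fin k, ∏ j ∈ Ioi i, (MvPolynomial.X j - MvPolynomial.X i)) * S) :
    ¬(p : ℤ) ∣ MvPolynomial.eval 1 S := by
  obtain ⟨G₀, hdet, hG₀⟩ := exists_det_X_pow_mul_eq hS Fin.val_strictMono
  obtain ⟨Ga, hGa, hGa1⟩ := exists_prod_X_pow_sub_X_pow_eq (R := ℤ) ha
  have hvdm : (of fun i j : Fin k => (X : ℤ[X]) ^ (a i * j)).det =
      ∏ i : Fin k, ∏ j ∈ Ioi i, ((X : ℤ[X]) ^ a j - X ^ a i) := by
    rw [← det_vandermonde]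
    congr 1
    ext i j
    simp [vandermonde_apply, pow_mul]
  rw [hvdm, hGa] at hdet
  have hX : (X - 1 : ℤ[X]) ≠ 0 := by simpa using X_sub_C_ne_zero (1 : ℤ)
  have := congrArg (eval 1) (mul_left_cancel₀ (pow_ne_zero _ hX) hdet)
  rw [hGa1, eval_mul, hG₀, eval_one_aeval_X_pow] at this
  exact fun h => not_dvd_prod_sub_of_lt hp ha hap (this ▸ h.mul_left _)

theorem det_pow_mul_ne_zero_of_isPrimitiveRoot {K : Type*} [Field K] [CharZero K] {p : ℕ}
    (hp : p.Prime) {ζ : K} (hζ : IsPrimitiveRoot ζ p) {a b : Fin k → ℕ} (ha : StrictMono a)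
    (hb : StrictMono b) (hap : ∀ i, a i < p) (hbp : ∀ i, b i < p) :
    (of fun i j => ζ ^ (a i * b j)).det ≠ 0 := by
  obtain ⟨S, hS⟩ := MvPolynomial.prod_X_sub_X_dvd_det_X_pow (R := ℤ) a
  obtain ⟨G, hdet, hG⟩ := exists_det_X_pow_mul_eq hS hb
  set Q := G * MvPolynomial.aeval (fun t => (X : ℤ[X]) ^ b t) S
  have hQ : ¬(p : ℤ) ∣ Q.eval 1 := by
    rw [eval_mul, hG, eval_one_aeval_X_pow]
    exact (Nat.prime_iff_prime_int.mp hp).not_dvd_mul (not_dvd_prod_sub_of_lt hp hb hbp)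
      (not_dvd_eval_one_of_det_X_pow_eq hp ha hap hS)
  intro h0
  refine hQ (hζ.prime_dvd_eval_one_of_aeval_eq_zero hp ?_)
  have hdetζ := congrArg (aeval ζ) hdet
  rw [AlgHom.map_det, map_mul, map_pow, map_sub, aeval_X, map_one] at hdetζ
  have hζ1 : ζ - 1 ≠ 0 := sub_ne_zero.mpr (hζ.ne_one hp.one_lt)
  refine (mul_eq_zero.mp (hdetζ.symm.trans ?_)).resolve_left (pow_ne_zero _ hζ1)
  rw [← h0]
  congr 1
  ext i j
  simp

end Chebotarev

theorem exists_ofReal_mem_ne_zero_of_star_mem {ι : Type*} {P : Submodule ℂ (ι → ℂ)}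
    (hP : ∀ z ∈ P, star z ∈ P) {z : ι → ℂ} (hz : z ∈ P) (hz0 : z ≠ 0) :
    ∃ y : ι → ℝ, (fun i => (y i : ℂ)) ∈ P ∧ y ≠ 0 ∧ ∀ i, z i = 0 → y i = 0 := by
  have re_mem : ∀ w ∈ P, (fun i => ((w i).re : ℂ)) ∈ P := fun w hw => by
    have : (fun i => ((w i).re : ℂ)) = (2⁻¹ : ℂ) • (w + star w) := by
      funext i
      simp [Complex.add_conj]
    exact this ▸ P.smul_mem _ (P.add_mem hw (hP w hw))
  by_cases hre : (fun i => (z i).re) = 0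
  · refine ⟨fun i => (z i).im, ?_, fun him => hz0 ?_, fun i hi => by simp [hi]⟩
    · simpa using re_mem _ (P.smul_mem (-Complex.I) hz)
    · exact funext fun i => Complex.ext (congrFun hre i) (congrFun him i)
  · exact ⟨fun i => (z i).re, re_mem z hz, hre, fun i hi => by simp [hi]⟩

section DFT

variable {n : ℕ}

theorem isPrimitiveRoot_dftXi (hn : n ≠ 0) : IsPrimitiveRoot (dftXi n) n := by
  have : dftXi n = (Complex.exp (2 * Real.pi * Complex.I / n))⁻¹ := by
    rw [dftXi, ← Complex.exp_neg]
    ring_nf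
  exact this ▸ (Complex.isPrimitiveRoot_exp n hn).inv

theorem FdftRows_mulVec_eq_zero_iff [NeZero n] {Ω : Finset (Fin n)} {z : Fin n → ℂ} :
    FdftRows n Ω *ᵥ z = 0 ↔ ∀ k ∈ Ω, ∑ l : Fin n, dftXi n ^ ((k : ℕ) * l) * z l = 0 := by
  have hc : ((Real.sqrt n : ℝ) : ℂ)⁻¹ ≠ 0 := by simp [NeZero.ne n]
  simp only [funext_iff, mulVec, dotProduct, FdftRows, Fdft, of_apply, Pi.zero_apply, mul_assoc,
    ← mul_sum, mul_eq_zero, hc, false_or]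
  refine ⟨fun h k hk => ?_, fun h a => h _ (orderEmbOfFin_mem Ω rfl a)⟩
  obtain ⟨a, rfl⟩ : k ∈ Set.range (Ω.orderEmbOfFin rfl) := by rwa [range_orderEmbOfFin]
  exact h a

theorem star_dftXi_pow_neg_mul [NeZero n] (k l : Fin n) :
    star (dftXi n ^ (((-k : Fin n) : ℕ) * l)) = dftXi n ^ ((k : ℕ) * l) := by
  have hξ := isPrimitiveRoot_dftXi (NeZero.ne n)
  rw [star_pow, Complex.star_def, ← Complex.inv_eq_conj (hξ.norm'_eq_one (NeZero.ne n)), inv_pow]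
  refine inv_eq_of_mul_eq_one_left ?_
  rw [← pow_add, ← add_mul, hξ.pow_eq_one_iff_dvd]
  refine Dvd.dvd.mul_right (Nat.dvd_of_mod_eq_zero ?_) _
  rw [← Fin.val_add, add_neg_cancel, Fin.val_zero]

theorem FdftRows_mulVec_star_eq_zero [NeZero n] {Ω : Finset (Fin n)} (hsym : ∀ k ∈ Ω, -k ∈ Ω)
    {z : Fin n → ℂ} (hz : FdftRows n Ω *ᵥ z = 0) : FdftRows n Ω *ᵥ star z = 0 := by
  rw [FdftRows_mulVec_eq_zero_iff] at hz ⊢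
  intro k hk
  simpa only [star_sum, star_mul', star_zero, star_dftXi_pow_neg_mul, Pi.star_apply]
    using congrArg star (hz (-k) (hsym k hk))

end DFT

section DFTNull

variable {n : ℕ} {Ω : Finset (Fin n)}

theorem eq_zero_of_FdftRows_mulVec_eq_zero (hn : n.Prime) {z : Fin n → ℂ}
    (hz : FdftRows n Ω *ᵥ z = 0) {T : Finset (Fin n)} (hT : ∀ l ∉ T, z l = 0)
    (hcard : #T ≤ #Ω) : z = 0 := by
  have : NeZero n := ⟨hn.ne_zero⟩
  obtain ⟨Ω', hΩ', hcard'⟩ := exists_subset_card_eq hcard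
  set a := Ω'.orderEmbOfFin hcard'
  set b := T.orderEmbOfFin rfl
  have hdet : (of fun r c => dftXi n ^ ((a r : ℕ) * b c)).det ≠ 0 :=
    det_pow_mul_ne_zero_of_isPrimitiveRoot hn (isPrimitiveRoot_dftXi hn.ne_zero)
      (fun _ _ h => a.strictMono h) (fun _ _ h => b.strictMono h) (fun r => (a r).isLt)
      fun c => (b c).isLt
  have hzT : (of fun r c => dftXi n ^ ((a r : ℕ) * b c)) *ᵥ (fun c => z (b c)) = 0 := by
    have hsum (f : Fin n → ℂ) : ∑ c, f (b c) = ∑ l ∈ T, f l :=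
      (sum_map _ _ _).symm.trans (congrArg (fun s => ∑ l ∈ s, f l) (map_orderEmbOfFin_univ T rfl))
    funext r
    rw [Pi.zero_apply, ← FdftRows_mulVec_eq_zero_iff.mp hz (a r) (hΩ' (orderEmbOfFin_mem _ _ r)),
      ← sum_subset (subset_univ T) fun l _ hl => by rw [hT l hl, mul_zero], ← hsum]
    rfl
  have hzb := eq_zero_of_mulVec_eq_zero hdet hzT
  funext l
  by_cases hl : l ∈ T
  · obtain ⟨c, rfl⟩ : l ∈ Set.range b := by rwa [range_orderEmbOfFin]
    exact congrFun hzb c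
  · exact hT l hl

theorem InRealNull.eq_zero_of_card_le (hn : n.Prime) {x : Fin n → ℝ} (hx : InRealNull n Ω x)
    {T : Finset (Fin n)} (hT : ∀ l ∉ T, x l = 0) (hcard : #T ≤ #Ω) : x = 0 := by
  have := eq_zero_of_FdftRows_mulVec_eq_zero hn hx (by simpa using hT) hcard
  exact funext fun i => by simpa using congrFun this i

theorem exists_inRealNull_ne_zero_supported [NeZero n] (hsym : ∀ k ∈ Ω, -k ∈ Ω)
    {Γ : Finset (Fin n)} (hΓ : #Ω < #Γ) : ∃ y, InRealNull n Ω y ∧ y ≠ 0 ∧ ∀ i ∉ Γ, y i = 0 := by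
  let e := Function.ExtendByZero.linearMap ℂ ((↑) : Γ → Fin n)
  have hker : LinearMap.ker ((FdftRows n Ω).mulVecLin ∘ₗ e) ≠ ⊥ :=
    LinearMap.ker_ne_bot_of_finrank_lt (by simpa using hΓ)
  obtain ⟨w, hw, hw0⟩ := (Submodule.ne_bot_iff _).mp hker
  have he : ∀ i ∉ Γ, e w i = 0 := fun i hi =>
    Function.extend_apply' _ _ _ fun ⟨j, hj⟩ => hi (hj ▸ j.2)
  have he0 : e w ≠ 0 := fun h => hw0 (funext fun j => by
    simpa [e, Subtype.val_injective.extend_apply] using congrFun h j)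
  obtain ⟨y, hy, hy0, hyw⟩ := exists_ofReal_mem_ne_zero_of_star_mem
    (P := LinearMap.ker (FdftRows n Ω).mulVecLin) (fun z hz => FdftRows_mulVec_star_eq_zero hsym hz)
    hw he0
  exact ⟨y, hy, hy0, fun i hi => hyw i (he i hi)⟩

end DFTNull

theorem stmt15_general (n : ℕ) (hn : n.Prime) (Ω : Finset (Fin n))
    (hsym : ∀ k ∈ Ω, -k ∈ Ω) :
    {x : Fin n → ℝ | (InRealNull n Ω x ∧ x ≠ 0 ∧
        ¬∃ y : Fin n → ℝ, InRealNull n Ω y ∧ y ≠ 0 ∧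
          Function.support y ⊂ Function.support x) ∧ l1 x = 1}
    = {x : Fin n → ℝ | ∃ Γ : Finset (Fin n), Γ.card = Ω.card + 1 ∧
        InRealNull n Ω x ∧ (∀ i ∉ Γ, x i = 0) ∧ l1 x = 1} := by
  have : NeZero n := ⟨hn.ne_zero⟩
  ext x
  have hmin := minimal_support_iff_exists_card_eq
    (fun _ _ hv hT hcard => InRealNull.eq_zero_of_card_le hn hv hT hcard)
    (fun _ hΓ => exists_inRealNull_ne_zero_supported hsym hΓ) x
  have hx0 : l1 x = 1 → x ≠ 0 := by
    rintro h rfl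
    simp [l1] at h
  simp only [Set.mem_ofPred_eq]
  constructor
  · rintro ⟨h, hl1⟩
    obtain ⟨hx, -, Γ, hΓ, hxΓ⟩ := hmin.mp h
    exact ⟨Γ, hΓ, hx, hxΓ, hl1⟩
  · rintro ⟨Γ, hΓ, hx, hxΓ, hl1⟩
    exact ⟨hmin.mpr ⟨hx, hx0 hl1, Γ, hΓ, hxΓ⟩, hl1⟩

/-- Let `n` be prime and `Ω ⊆ U_n` a nonempty index set closed under `k ↦ n - k`.  Then
the unit-ℓ₁-norm vectors of minimal support in the real nullspace of `F_Ω` are exactly the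
unit-ℓ₁-norm real nullspace vectors supported on some `Γ ⊆ U_n` with `|Γ| = |Ω| + 1`. -/
theorem stmt15 (n : ℕ) (hn : n.Prime) (Ω : Finset (Fin n)) (hΩ : Ω.Nonempty)
    (hsym : ∀ k ∈ Ω, -k ∈ Ω) :
    {x : Fin n → ℝ | (InRealNull n Ω x ∧ x ≠ 0 ∧
        ¬∃ y : Fin n → ℝ, InRealNull n Ω y ∧ y ≠ 0 ∧
          Function.support y ⊂ Function.support x) ∧ l1 x = 1}
    = {x : Fin n → ℝ | ∃ Γ : Finset (Fin n), Γ.card = Ω.card + 1 ∧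
        InRealNull n Ω x ∧ (∀ i ∉ Γ, x i = 0) ∧ l1 x = 1} :=
  stmt15_general n hn Ω hsym
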